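/- Let f ∈ I be nonzero and t ∈ 𝕋ⁿ (so that tf is a nonzero element of I). Then S(tf) ≤ t·S(f); moreover S(tf) = t·S(f) if and only if t·S(f) ∈ NS(Syz F), and S(tf) < t·S(f) if and only if t·S(f) ∈ LT(Syz F). -/

import Mathlib

open MvPolynomial

namespace F5

noncomputable section
open scoped Classical

/-- Monomials (power products) in `n` variables, represented by exponent vectors. -/
abbrev Mon (n : ℕ) : Type := Fin n →₀ ℕ

/-- Module terms `t·eₗ` of the free module `Pᵐ`. -/
abbrev MTerm (n m : ℕ) : Type := (Fin n →₀ ℕ) × Fin m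

/-- Action of a monomial on a module term: `u • (t eₗ) = (u t) eₗ`. -/
def mact {n m : ℕ} (u : Mon n) (σ : MTerm n m) : MTerm n m := (u + σ.1, σ.2)

/-- An admissible order on monomials: a linear order with `1 ≤ t` and
compatibility with multiplication. -/
structure AdmissibleOrder (n : ℕ) where
  ord : LinearOrder (Mon n)
  one_le : ∀ t : Mon n, ord.le 0 t
  mul_lt_mul : ∀ s t u : Mon n, ord.lt s t → ord.lt (u + s) (u + t)

/-- An admissible module order on module terms: a linear well-order compatible
with the monomial action, and such that `σ ≤ u σ`. -/
structure ModuleOrder (n m : ℕ) where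
  ord : LinearOrder (MTerm n m)
  wf : WellFounded ord.lt
  mul_lt_mul : ∀ (σ τ : MTerm n m) (u : Mon n), ord.lt σ τ → ord.lt (mact u σ) (mact u τ)
  le_mul : ∀ (σ : MTerm n m) (u : Mon n), ord.le σ (mact u σ)

variable {k : Type*} [Field k] {n m : ℕ}

/-- The leading monomial of a polynomial with respect to `μ` (junk value `0` for `f = 0`). -/
noncomputable def pLT (μ : AdmissibleOrder n) (f : MvPolynomial (Fin n) k) : Mon n :=
  if h : f.support.Nonempty then @Finset.max' _ μ.ord f.support h else 0

/-- The leading coefficient of a polynomial with respect to `μ`. -/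
noncomputable def pLC (μ : AdmissibleOrder n) (f : MvPolynomial (Fin n) k) : k :=
  f.coeff (pLT μ f)

/-- The set (finset) of module terms occurring in an element of `Pᵐ`. -/
noncomputable def msupport (u : Fin m → MvPolynomial (Fin n) k) : Finset (MTerm n m) :=
  letI := Classical.decEq (MTerm n m)
  Finset.univ.biUnion fun l => (u l).support.image fun t => (t, l)

/-- A junk default module term (needs `m ≠ 0`). -/
def mdefault [NeZero m] : MTerm n m := (0, ⟨0, Nat.pos_of_ne_zero (NeZero.ne m)⟩)

/-- The leading module term of a nonzero element of `Pᵐ` with respect to `μ'`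
(junk value for `0`). -/
noncomputable def mLT [NeZero m] (μ' : ModuleOrder n m) (u : Fin m → MvPolynomial (Fin n) k) :
    MTerm n m :=
  if h : (msupport u).Nonempty then @Finset.max' _ μ'.ord _ h else mdefault

/-- The map `v : Pᵐ → P`, `v(eᵢ) = fᵢ`. -/
noncomputable def vmap (F : Fin m → MvPolynomial (Fin n) k)
    (u : Fin m → MvPolynomial (Fin n) k) : MvPolynomial (Fin n) k :=
  ∑ i, u i * F i

/-- The ideal `I = (f₁, …, fₘ)`. -/
noncomputable def idealI (F : Fin m → MvPolynomial (Fin n) k) : Ideal (MvPolynomial (Fin n) k) :=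
  Ideal.span (Set.range F)

/-- `LT(Syz F)`: leading module terms of nonzero syzygies of `F`. -/
def LTSyz [NeZero m] (μ' : ModuleOrder n m) (F : Fin m → MvPolynomial (Fin n) k) :
    Set (MTerm n m) :=
  {σ | ∃ s : Fin m → MvPolynomial (Fin n) k, s ≠ 0 ∧ vmap F s = 0 ∧ mLT μ' s = σ}

/-- The signature `S(f)`: the `μ'`-minimum of `{LT(u) : v(u) = f}` (junk for `f = 0` or
`f ∉ I`). -/
noncomputable def sig [NeZero m] (μ' : ModuleOrder n m) (F : Fin m → MvPolynomial (Fin n) k)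
    (f : MvPolynomial (Fin n) k) : MTerm n m :=
  if hne : {σ : MTerm n m |
      ∃ u : Fin m → MvPolynomial (Fin n) k, u ≠ 0 ∧ vmap F u = f ∧ mLT μ' u = σ}.Nonempty
  then μ'.wf.min _ hne else mdefault

/-- `f` S-reduces to `g` with `h`, with respect to `σ`. -/
noncomputable def SReduces [NeZero m] (μ : AdmissibleOrder n) (μ' : ModuleOrder n m)
    (F : Fin m → MvPolynomial (Fin n) k)
    (f h g : MvPolynomial (Fin n) k) (σ : MTerm n m) : Prop :=
  ∃ (t : Mon n) (α : k), α ≠ 0 ∧ g = f - (monomial t α) * h ∧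
    (g = 0 ∨ μ.ord.lt (pLT μ g) (pLT μ f)) ∧
    μ'.ord.lt (sig μ' F ((monomial t (1 : k)) * h)) σ

/-- `f` is S-irreducible with respect to `σ`. -/
noncomputable def SIrr [NeZero m] (μ : AdmissibleOrder n) (μ' : ModuleOrder n m)
    (F : Fin m → MvPolynomial (Fin n) k) (f : MvPolynomial (Fin n) k) (σ : MTerm n m) : Prop :=
  f = 0 ∨ ¬ ∃ h : MvPolynomial (Fin n) k, h ∈ idealI F ∧ h ≠ 0 ∧
    ∃ g : MvPolynomial (Fin n) k, SReduces μ μ' F f h g σ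

/-- `G` is an S-Gröbner basis (of `I` w.r.t. `μ`, `F`, `μ'`). -/
noncomputable def IsSGB [NeZero m] (μ : AdmissibleOrder n) (μ' : ModuleOrder n m)
    (F : Fin m → MvPolynomial (Fin n) k) (G : Set (MvPolynomial (Fin n) k)) : Prop :=
  (∀ g ∈ G, g ∈ idealI F ∧ g ≠ 0) ∧
  ∀ f : MvPolynomial (Fin n) k, f ∈ idealI F → f ≠ 0 → SIrr μ μ' F f (sig μ' F f) →
    ∃ g ∈ G, ∃ t : Mon n,
      pLT μ ((monomial t (1 : k)) * g) = pLT μ f ∧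
      sig μ' F ((monomial t (1 : k)) * g) = sig μ' F f

/-- `LT(I)`: the set of leading monomials of nonzero elements of `I`. -/
def LTIdeal (μ : AdmissibleOrder n) (F : Fin m → MvPolynomial (Fin n) k) : Set (Mon n) :=
  {t | ∃ f : MvPolynomial (Fin n) k, f ∈ idealI F ∧ f ≠ 0 ∧ pLT μ f = t}

/-- `φ(t)`: the `μ'`-minimum signature of nonzero elements of `I` with leading monomial `t`. -/
noncomputable def phi [NeZero m] (μ : AdmissibleOrder n) (μ' : ModuleOrder n m)
    (F : Fin m → MvPolynomial (Fin n) k) (t : Mon n) : MTerm n m :=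
  if hne : {σ : MTerm n m | ∃ f : MvPolynomial (Fin n) k,
      f ∈ idealI F ∧ f ≠ 0 ∧ pLT μ f = t ∧ sig μ' F f = σ}.Nonempty
  then μ'.wf.min _ hne else mdefault

/-- `f` is a primitive S-irreducible polynomial. -/
noncomputable def PrimSIrr [NeZero m] (μ : AdmissibleOrder n) (μ' : ModuleOrder n m)
    (F : Fin m → MvPolynomial (Fin n) k) (f : MvPolynomial (Fin n) k) : Prop :=
  f ∈ idealI F ∧ f ≠ 0 ∧ SIrr μ μ' F f (sig μ' F f) ∧
  ¬ ∃ (f' : MvPolynomial (Fin n) k) (t : Mon n),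
      f' ∈ idealI F ∧ f' ≠ 0 ∧ t ≠ 0 ∧ SIrr μ μ' F f' (sig μ' F f') ∧
      pLT μ ((monomial t (1 : k)) * f') = pLT μ f ∧
      sig μ' F ((monomial t (1 : k)) * f') = sig μ' F f

/-- The lcm of two monomials (pointwise maximum of exponents). -/
def lcmMon {n : ℕ} (s t : Mon n) : Mon n := t + (s - t)

/-- The term `u₁ = lcm(LT g₁, LT g₂)/(LC g₁ · LT g₁)` (when the first argument is `g₁`). -/
noncomputable def uterm (μ : AdmissibleOrder n) (g₁ g₂ : MvPolynomial (Fin n) k) :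
    MvPolynomial (Fin n) k :=
  monomial (lcmMon (pLT μ g₁) (pLT μ g₂) - pLT μ g₁) (pLC μ g₁)⁻¹

/-- The S-polynomial of `g₁` and `g₂`. -/
noncomputable def Spol (μ : AdmissibleOrder n) (g₁ g₂ : MvPolynomial (Fin n) k) :
    MvPolynomial (Fin n) k :=
  uterm μ g₁ g₂ * g₁ - uterm μ g₂ g₁ * g₂

/-- `(g₁, g₂)` is a normal pair. -/
noncomputable def NormalPair [NeZero m] (μ : AdmissibleOrder n) (μ' : ModuleOrder n m)
    (F : Fin m → MvPolynomial (Fin n) k) (g₁ g₂ : MvPolynomial (Fin n) k) : Prop :=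
  PrimSIrr μ μ' F g₁ ∧ PrimSIrr μ μ' F g₂ ∧
  sig μ' F (uterm μ g₁ g₂ * g₁) =
    mact (lcmMon (pLT μ g₁) (pLT μ g₂) - pLT μ g₁) (sig μ' F g₁) ∧
  sig μ' F (uterm μ g₂ g₁ * g₂) =
    mact (lcmMon (pLT μ g₂) (pLT μ g₁) - pLT μ g₂) (sig μ' F g₂) ∧
  sig μ' F (uterm μ g₁ g₂ * g₁) ≠ sig μ' F (uterm μ g₂ g₁ * g₂)


end
end F5

/-!
If `v(u) = f` with `LT(u) = S(f)`, then `t·u` represents `tf` and has leading term `t·S(f)`, so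
`S(tf) ≤ t·S(f)`. For any representation `u` of a nonzero `g`, `S(g) < LT(u)` exactly when `LT(u)`
is the leading term of a syzygy: the difference of `u` and a representation of `g` with smaller
leading term is such a syzygy, and conversely subtracting a scalar multiple of a syzygy with
leading term `LT(u)` cancels the leading term of `u`.
-/

namespace F5

variable {k : Type*} [Field k] {n m : ℕ}

namespace ModuleOrder

-- `MTerm n m` already carries the product order as a global instance, so order lemmas for
-- `μ'.ord` have to be instantiated explicitly.

variable (μ' : ModuleOrder n m) {σ τ ρ : MTerm n m}

theorem lt_of_le_of_lt (h₁ : μ'.ord.le σ τ) (h₂ : μ'.ord.lt τ ρ) : μ'.ord.lt σ ρ :=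
  @_root_.lt_of_le_of_lt _ μ'.ord.toPreorder _ _ _ h₁ h₂

theorem lt_of_le_of_ne (h₁ : μ'.ord.le σ τ) (h₂ : σ ≠ τ) : μ'.ord.lt σ τ :=
  @_root_.lt_of_le_of_ne _ μ'.ord.toPartialOrder _ _ h₁ h₂

theorem lt_iff_le_and_ne : μ'.ord.lt σ τ ↔ μ'.ord.le σ τ ∧ σ ≠ τ :=
  @_root_.lt_iff_le_and_ne _ μ'.ord.toPartialOrder _ _

theorem lt_irrefl (σ : MTerm n m) : ¬ μ'.ord.lt σ σ :=
  @_root_.lt_irrefl _ μ'.ord.toPreorder _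

theorem not_lt : ¬ μ'.ord.lt σ τ ↔ μ'.ord.le τ σ :=
  @_root_.not_lt _ μ'.ord _ _

theorem mact_le_mact (t : Mon n) (h : μ'.ord.le σ τ) : μ'.ord.le (mact t σ) (mact t τ) := by
  obtain rfl | hne := eq_or_ne σ τ
  · exact μ'.ord.le_refl _
  · exact (μ'.lt_iff_le_and_ne.mp (μ'.mul_lt_mul _ _ t (μ'.lt_of_le_of_ne h hne))).1

end ModuleOrder

def mcoeff (u : Fin m → MvPolynomial (Fin n) k) (σ : MTerm n m) : k := (u σ.2).coeff σ.1

section Support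

variable {u w : Fin m → MvPolynomial (Fin n) k} {σ : MTerm n m}

theorem mem_msupport : σ ∈ msupport u ↔ mcoeff u σ ≠ 0 := by
  simp only [msupport, mcoeff, Finset.mem_biUnion, Finset.mem_univ, true_and, Finset.mem_image,
    mem_support_iff]
  exact ⟨fun ⟨_, _, hs, h⟩ => h ▸ hs, fun h => ⟨σ.2, σ.1, h, rfl⟩⟩

theorem msupport_nonempty (hu : u ≠ 0) : (msupport u).Nonempty := by
  obtain ⟨l, hl⟩ := Function.ne_iff.mp hu
  obtain ⟨s, hs⟩ := support_nonempty.mpr hl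
  exact ⟨(s, l), mem_msupport.mpr (mem_support_iff.mp hs)⟩

theorem ne_zero_of_mem_msupport (h : σ ∈ msupport u) : u ≠ 0 := by
  rintro rfl
  simp [mem_msupport, mcoeff] at h

@[simp]
theorem mcoeff_sub : mcoeff (u - w) σ = mcoeff u σ - mcoeff w σ := by
  simp [mcoeff]

@[simp]
theorem mcoeff_smul (c : k) : mcoeff (c • u) σ = c * mcoeff u σ := by
  simp [mcoeff]

theorem mcoeff_monomial_smul_mact (t : Mon n) (c : k) :
    mcoeff (monomial t c • u) (mact t σ) = c * mcoeff u σ := by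
  simp [mcoeff, mact, coeff_monomial_mul]

theorem msupport_sub_subset : msupport (u - w) ⊆ msupport u ∪ msupport w := by
  intro τ hτ
  rw [Finset.mem_union, mem_msupport, mem_msupport]
  by_contra! h
  simp [mem_msupport, h.1, h.2] at hτ

theorem msupport_smul_subset (c : k) : msupport (c • u) ⊆ msupport u := by
  intro τ hτ
  rw [mem_msupport, mcoeff_smul] at hτ
  exact mem_msupport.mpr (right_ne_zero_of_mul hτ)

end Support

section Vmap

variable (F : Fin m → MvPolynomial (Fin n) k) {u : Fin m → MvPolynomial (Fin n) k}

theorem vmap_sub (u w : Fin m → MvPolynomial (Fin n) k) :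
    vmap F (u - w) = vmap F u - vmap F w := by
  simp [vmap, sub_mul, Finset.sum_sub_distrib]

theorem vmap_smul {R : Type*} [DistribSMul R (MvPolynomial (Fin n) k)]
    [IsScalarTower R (MvPolynomial (Fin n) k) (MvPolynomial (Fin n) k)] (r : R)
    (u : Fin m → MvPolynomial (Fin n) k) : vmap F (r • u) = r • vmap F u := by
  simp only [vmap, Pi.smul_apply, smul_mul_assoc, Finset.smul_sum]

theorem ne_zero_of_vmap_ne_zero (hu : vmap F u ≠ 0) : u ≠ 0 := by
  rintro rfl
  simp [vmap] at hu

end Vmap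

section LeadingTerm

variable [NeZero m] (μ' : ModuleOrder n m) {u w s : Fin m → MvPolynomial (Fin n) k}
  {σ : MTerm n m}

theorem mLT_mem_msupport (hu : u ≠ 0) : mLT μ' u ∈ msupport u := by
  rw [mLT, dif_pos (msupport_nonempty hu)]
  exact @Finset.max'_mem _ μ'.ord _ _

theorem mcoeff_mLT_ne_zero (hu : u ≠ 0) : mcoeff u (mLT μ' u) ≠ 0 :=
  mem_msupport.mp (mLT_mem_msupport μ' hu)

theorem le_mLT (h : σ ∈ msupport u) : μ'.ord.le σ (mLT μ' u) := by
  rw [mLT, dif_pos (msupport_nonempty (ne_zero_of_mem_msupport h))]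
  exact @Finset.le_max' _ μ'.ord _ _ h

theorem mLT_eq_of_forall_le (hσ : mcoeff u σ ≠ 0) (h : ∀ τ ∈ msupport u, μ'.ord.le τ σ) :
    mLT μ' u = σ :=
  have hσ' : σ ∈ msupport u := mem_msupport.mpr hσ
  μ'.ord.le_antisymm _ _ (h _ (mLT_mem_msupport μ' (ne_zero_of_mem_msupport hσ')))
    (le_mLT μ' hσ')

theorem mLT_monomial_smul (hu : u ≠ 0) (t : Mon n) {c : k} (hc : c ≠ 0) :
    mLT μ' (monomial t c • u) = mact t (mLT μ' u) := by
  refine mLT_eq_of_forall_le μ' ?_ fun τ hτ => ?_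
  · rw [mcoeff_monomial_smul_mact]
    exact mul_ne_zero hc (mcoeff_mLT_ne_zero μ' hu)
  · have hτ' : (monomial t c * u τ.2).coeff τ.1 ≠ 0 := mem_msupport.mp hτ
    rw [coeff_monomial_mul'] at hτ'
    split_ifs at hτ' with ht
    · have hτt : mact t ((τ.1 - t, τ.2) : MTerm n m) = τ := by
        simp [mact, add_tsub_cancel_of_le ht]
      rw [← hτt]
      refine μ'.mact_le_mact t (le_mLT μ' (mem_msupport.mpr ?_))
      exact right_ne_zero_of_mul hτ'
    · exact absurd rfl hτ'

theorem mLT_sub_le (hw : ∀ τ ∈ msupport w, μ'.ord.le τ (mLT μ' u)) (huw : u - w ≠ 0) :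
    μ'.ord.le (mLT μ' (u - w)) (mLT μ' u) := by
  rcases Finset.mem_union.mp (msupport_sub_subset (mLT_mem_msupport μ' huw)) with h | h
  · exact le_mLT μ' h
  · exact hw _ h

theorem mLT_sub_of_lt (hu : u ≠ 0) (h : μ'.ord.lt (mLT μ' w) (mLT μ' u)) :
    mLT μ' (u - w) = mLT μ' u := by
  have hw : ∀ τ ∈ msupport w, μ'.ord.lt τ (mLT μ' u) := fun τ hτ =>
    μ'.lt_of_le_of_lt (le_mLT μ' hτ) h
  have hcoeff : mcoeff (u - w) (mLT μ' u) ≠ 0 := by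
    have hw0 : mcoeff w (mLT μ' u) = 0 := by
      by_contra hne
      exact μ'.lt_irrefl _ (hw _ (mem_msupport.mpr hne))
    rw [mcoeff_sub, hw0, sub_zero]
    exact mcoeff_mLT_ne_zero μ' hu
  refine mLT_eq_of_forall_le μ' hcoeff fun τ hτ => ?_
  rcases Finset.mem_union.mp (msupport_sub_subset hτ) with h | h
  · exact le_mLT μ' h
  · exact (μ'.lt_iff_le_and_ne.mp (hw _ h)).1

theorem mLT_sub_smul_lt (hs : s ≠ 0) (hsu : mLT μ' s = mLT μ' u)
    (h : u - (mcoeff u (mLT μ' u) / mcoeff s (mLT μ' s)) • s ≠ 0) :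
    μ'.ord.lt (mLT μ' (u - (mcoeff u (mLT μ' u) / mcoeff s (mLT μ' s)) • s)) (mLT μ' u) := by
  refine μ'.lt_of_le_of_ne (mLT_sub_le μ' (fun τ hτ => ?_) h) fun heq => ?_
  · exact hsu ▸ le_mLT μ' (msupport_smul_subset _ hτ)
  · have := mcoeff_mLT_ne_zero μ' h
    rw [heq, mcoeff_sub, mcoeff_smul, ← hsu, div_mul_cancel₀ _ (mcoeff_mLT_ne_zero μ' hs),
      sub_self] at this
    exact this rfl

end LeadingTerm

section Signature

variable [NeZero m] (μ' : ModuleOrder n m) (F : Fin m → MvPolynomial (Fin n) k)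
  {u : Fin m → MvPolynomial (Fin n) k}

theorem exists_mLT_eq_sig (hu : u ≠ 0) :
    ∃ w, w ≠ 0 ∧ vmap F w = vmap F u ∧ mLT μ' w = sig μ' F (vmap F u) := by
  have hmem : mLT μ' u ∈ {σ : MTerm n m | ∃ w : Fin m → MvPolynomial (Fin n) k,
      w ≠ 0 ∧ vmap F w = vmap F u ∧ mLT μ' w = σ} := ⟨u, hu, rfl, rfl⟩
  rw [sig, dif_pos ⟨_, hmem⟩]
  exact μ'.wf.min_mem _ ⟨_, hmem⟩

theorem sig_le_mLT (hu : u ≠ 0) : μ'.ord.le (sig μ' F (vmap F u)) (mLT μ' u) := by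
  have hmem : mLT μ' u ∈ {σ : MTerm n m | ∃ w : Fin m → MvPolynomial (Fin n) k,
      w ≠ 0 ∧ vmap F w = vmap F u ∧ mLT μ' w = σ} := ⟨u, hu, rfl, rfl⟩
  rw [sig, dif_pos ⟨_, hmem⟩]
  exact μ'.not_lt.mp (μ'.wf.not_lt_min _ hmem)

theorem sig_lt_mLT_iff (hu : vmap F u ≠ 0) :
    μ'.ord.lt (sig μ' F (vmap F u)) (mLT μ' u) ↔ mLT μ' u ∈ LTSyz μ' F := by
  have hu0 := ne_zero_of_vmap_ne_zero F hu
  constructor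
  · intro hlt
    obtain ⟨w, -, hwu, hw⟩ := exists_mLT_eq_sig μ' F hu0
    have hsyz := mLT_sub_of_lt μ' hu0 (hw ▸ hlt)
    refine ⟨u - w, fun h0 => ?_, by rw [vmap_sub, hwu, sub_self], hsyz⟩
    obtain rfl := sub_eq_zero.mp h0
    rw [hw] at hlt
    exact μ'.lt_irrefl _ hlt
  · rintro ⟨s, hs, hsv, hsu⟩
    set w := u - (mcoeff u (mLT μ' u) / mcoeff s (mLT μ' s)) • s
    have hwv : vmap F w = vmap F u := by
      rw [vmap_sub, vmap_smul, hsv, smul_zero, sub_zero]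
    have hw0 : w ≠ 0 := ne_zero_of_vmap_ne_zero F (hwv ▸ hu)
    exact μ'.lt_of_le_of_lt (hwv ▸ sig_le_mLT μ' F hw0) (mLT_sub_smul_lt μ' hs hsu hw0)

end Signature

end F5

open F5 MvPolynomial

/-- `S(tf) ≤ t·S(f)`, with equality iff `t·S(f) ∈ NS(Syz F)` and strict
inequality iff `t·S(f) ∈ LT(Syz F)`. -/
theorem stmt_2 {k : Type*} [Field k] {n m : ℕ} [NeZero m]
    (μ' : ModuleOrder n m) (F : Fin m → MvPolynomial (Fin n) k)
    (f : MvPolynomial (Fin n) k) (t : Mon n)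
    (hfI : f ∈ idealI F) (hf : f ≠ 0) :
    μ'.ord.le (sig μ' F ((monomial t (1 : k)) * f)) (mact t (sig μ' F f)) ∧
    (sig μ' F ((monomial t (1 : k)) * f) = mact t (sig μ' F f) ↔
       mact t (sig μ' F f) ∉ LTSyz μ' F) ∧
    (μ'.ord.lt (sig μ' F ((monomial t (1 : k)) * f)) (mact t (sig μ' F f)) ↔
       mact t (sig μ' F f) ∈ LTSyz μ' F) := by
  obtain ⟨c, hc : vmap F c = f⟩ := Ideal.mem_span_range_iff_exists_fun.mp hfI
  obtain ⟨u, hu0, hu, huS⟩ := exists_mLT_eq_sig μ' F (ne_zero_of_vmap_ne_zero F (hc ▸ hf))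
  rw [hc] at hu huS
  have htu : vmap F (monomial t (1 : k) • u) = monomial t 1 * f := by
    rw [vmap_smul, hu, smul_eq_mul]
  have hLT : mLT μ' (monomial t (1 : k) • u) = mact t (sig μ' F f) := by
    rw [mLT_monomial_smul μ' hu0 t one_ne_zero, huS]
  have htf : vmap F (monomial t (1 : k) • u) ≠ 0 :=
    htu ▸ mul_ne_zero (by simp [monomial_eq_zero]) hf
  have hle := sig_le_mLT μ' F (ne_zero_of_vmap_ne_zero F htf)
  have hlt := sig_lt_mLT_iff μ' F htf
  rw [htu, hLT] at hle hlt
  refine ⟨hle, ?_, hlt⟩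
  rw [← hlt, μ'.lt_iff_le_and_ne, not_and_not_right]
  exact ⟨fun h _ => h, fun h => h hle⟩
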